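/- arXiv:2306.03683 — 3 statements merged into one kernel-verified Lean document; each statement's English description precedes it below -/
import Mathlib

section
/- Let Λ, ε, γ, T be positive real numbers. Suppose λ : ℝ → ℝ is differentiable at every point of [0, T], satisfies λ(t) > 0 for all t ∈ [0, T], and obeys the differential inequality λ'(t) ≥ −2Λε·e^{−γt}·λ(t) − 2Λε·e^{−γt}·√(λ(t)) − 2ε²·e^{−2γt}·λ(t) for all t ∈ [0, T]. Then for every t ∈ [0, T] one has √(λ(t)) ≥ e^{−(2Λε+ε²)/(2γ)}·√(λ(0)) − Λε/γ. -/
/-!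
With `u = √λ` the inequality becomes `u' ≥ -(a + b) u - a`, where `a = Λε e^{-γt}` and
`b = ε² e^{-2γt}`. For `A` a primitive of `a + b` and `σ` a primitive of `e^{-γt}`, both vanishing
at `0`, the function `e^{A} (u + Λε σ)` is nondecreasing. The bounds `A ≤ (2Λε + ε²)/(2γ)` and
`σ ≤ 1/γ` then turn its value at `t` versus `0` into the claim.
-/

open Real Set

/-- `∫₀ˢ e^{-k r} dr`. -/
noncomputable def expDecayIntegral (k s : ℝ) : ℝ := (1 - exp (-k * s)) / k

theorem hasDerivAt_expDecayIntegral {k : ℝ} (hk : k ≠ 0) (s : ℝ) :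
    HasDerivAt (expDecayIntegral k) (exp (-k * s)) s := by
  have hexp : HasDerivAt (fun x => exp (-k * x)) (exp (-k * s) * -k) s := by
    simpa using ((hasDerivAt_id s).const_mul (-k)).exp
  exact ((hexp.const_sub 1).div_const k).congr_deriv (by field_simp)

@[simp]
theorem expDecayIntegral_zero (k : ℝ) : expDecayIntegral k 0 = 0 := by
  simp [expDecayIntegral]

theorem expDecayIntegral_nonneg {k s : ℝ} (hk : 0 < k) (hs : 0 ≤ s) :
    0 ≤ expDecayIntegral k s := by
  have : exp (-k * s) ≤ 1 := exp_le_one_iff.mpr (by nlinarith)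
  exact div_nonneg (by linarith) hk.le

theorem expDecayIntegral_le {k : ℝ} (hk : 0 < k) (s : ℝ) : expDecayIntegral k s ≤ 1 / k := by
  unfold expDecayIntegral
  gcongr
  linarith [exp_pos (-k * s)]

theorem monotoneOn_exp_mul_of_hasDerivAt {A a f f' : ℝ → ℝ} {s : Set ℝ} (hs : Convex ℝ s)
    (hA : ∀ x ∈ s, HasDerivAt A (a x) x) (hf : ∀ x ∈ s, HasDerivAt f (f' x) x)
    (h : ∀ x ∈ interior s, 0 ≤ f' x + a x * f x) :
    MonotoneOn (fun x => exp (A x) * f x) s := by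
  have hderiv : ∀ x ∈ s, HasDerivAt (fun x => exp (A x) * f x)
      (exp (A x) * (f' x + a x * f x)) x := fun x hx =>
    ((hA x hx).exp.mul (hf x hx)).congr_deriv (by ring)
  refine monotoneOn_of_deriv_nonneg hs
    (fun x hx => (hderiv x hx).continuousAt.continuousWithinAt)
    (fun x hx => (hderiv x (interior_subset hx)).differentiableAt.differentiableWithinAt)
    (fun x hx => ?_)
  rw [(hderiv x (interior_subset hx)).deriv]
  exact mul_nonneg (exp_pos _).le (h x hx)

/-- The inequality `l ≥ -2p x - 2c √x` for `l = x'` rewritten for `(√x)' = l / (2√x)`. -/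
theorem neg_mul_sqrt_sub_le_div_two_sqrt {x l p c : ℝ} (hx : 0 < x)
    (h : -2 * p * x - 2 * c * √x ≤ l) : -p * √x - c ≤ l / (2 * √x) := by
  rw [le_div_iff₀ (by positivity)]
  linear_combination h + (-2 * p) * mul_self_sqrt hx.le

theorem monotoneOn_exp_mul_sqrt_add {lam A σ p e : ℝ → ℝ} {c : ℝ} {s : Set ℝ} (hs : Convex ℝ s)
    (hc : 0 ≤ c) (hA : ∀ x ∈ s, HasDerivAt A (p x) x) (hσ : ∀ x ∈ s, HasDerivAt σ (e x) x)
    (hp : ∀ x ∈ s, 0 ≤ p x) (hσ_nonneg : ∀ x ∈ s, 0 ≤ σ x)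
    (hdiff : ∀ x ∈ s, DifferentiableAt ℝ lam x) (hpos : ∀ x ∈ s, 0 < lam x)
    (hineq : ∀ x ∈ s, -2 * p x * lam x - 2 * (c * e x) * √(lam x) ≤ deriv lam x) :
    MonotoneOn (fun x => exp (A x) * (√(lam x) + c * σ x)) s := by
  refine monotoneOn_exp_mul_of_hasDerivAt hs hA
    (fun x hx => ((hdiff x hx).hasDerivAt.sqrt (hpos x hx).ne').add ((hσ x hx).const_mul c))
    (fun x hx => ?_)
  have hx := interior_subset hx
  have hsqrt := neg_mul_sqrt_sub_le_div_two_sqrt (hpos x hx) (hineq x hx)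
  have hσ_term : 0 ≤ p x * (c * σ x) := mul_nonneg (hp x hx) (mul_nonneg hc (hσ_nonneg x hx))
  linarith

theorem stmt_0_general (Λ ε γ T : ℝ) (hΛ : 0 < Λ) (hε : 0 < ε) (hγ : 0 < γ)
    (lam : ℝ → ℝ)
    (hdiff : ∀ t ∈ Set.Icc (0 : ℝ) T, DifferentiableAt ℝ lam t)
    (hpos : ∀ t ∈ Set.Icc (0 : ℝ) T, 0 < lam t)
    (hineq : ∀ t ∈ Set.Icc (0 : ℝ) T,
      deriv lam t ≥
        -(2 * Λ * ε * Real.exp (-γ * t)) * lam t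
          - 2 * Λ * ε * Real.exp (-γ * t) * Real.sqrt (lam t)
          - 2 * ε ^ 2 * Real.exp (-2 * γ * t) * lam t) :
    ∀ t ∈ Set.Icc (0 : ℝ) T,
      Real.sqrt (lam t) ≥
        Real.exp (-(2 * Λ * ε + ε ^ 2) / (2 * γ)) * Real.sqrt (lam 0) - Λ * ε / γ := by
  intro t ht
  have hΛε : 0 < Λ * ε := mul_pos hΛ hε
  set σ := expDecayIntegral γ
  set A := fun s => Λ * ε * σ s + ε ^ 2 * expDecayIntegral (2 * γ) s
  have hA : ∀ s, HasDerivAt A (Λ * ε * exp (-γ * s) + ε ^ 2 * exp (-2 * γ * s)) s := fun s => by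
    have h2γ := hasDerivAt_expDecayIntegral (by positivity : 2 * γ ≠ 0) s
    rw [show -(2 * γ) * s = -2 * γ * s by ring] at h2γ
    exact ((hasDerivAt_expDecayIntegral hγ.ne' s).const_mul _).add (h2γ.const_mul _)
  have hmono := monotoneOn_exp_mul_sqrt_add (convex_Icc 0 T) hΛε.le (fun s _ => hA s)
    (fun s _ => hasDerivAt_expDecayIntegral hγ.ne' s) (fun s _ => by positivity)
    (fun s hs => expDecayIntegral_nonneg hγ hs.1) hdiff hpos
    (fun s hs => by linear_combination hineq s hs)
  have hq : √(lam 0) ≤ exp (A t) * (√(lam t) + Λ * ε * σ t) := by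
    simpa [A, σ] using hmono ⟨le_rfl, ht.1.trans ht.2⟩ ht ht.1
  have hAt : A t ≤ (2 * Λ * ε + ε ^ 2) / (2 * γ) := by
    calc A t ≤ Λ * ε * (1 / γ) + ε ^ 2 * (1 / (2 * γ)) :=
          add_le_add (mul_le_mul_of_nonneg_left (expDecayIntegral_le hγ t) hΛε.le)
            (mul_le_mul_of_nonneg_left (expDecayIntegral_le (by positivity) t) (sq_nonneg ε))
      _ = (2 * Λ * ε + ε ^ 2) / (2 * γ) := by field_simp
  have hσt : Λ * ε * σ t ≤ Λ * ε / γ := by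
    simpa [div_eq_mul_one_div (Λ * ε)] using
      mul_le_mul_of_nonneg_left (expDecayIntegral_le hγ t) hΛε.le
  calc exp (-(2 * Λ * ε + ε ^ 2) / (2 * γ)) * √(lam 0) - Λ * ε / γ
      ≤ exp (-A t) * (exp (A t) * (√(lam t) + Λ * ε * σ t)) - Λ * ε / γ := by
        rw [neg_div]
        gcongr
    _ ≤ √(lam t) := by
        rw [← mul_assoc, ← exp_add, neg_add_cancel, exp_zero, one_mul]
        linarith

/-- Analytic core of the first-eigenvalue estimate (Lemma 3.2, inequality (83)):
if `lam` is positive, differentiable on `[0, T]`, and satisfies the differential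
inequality
`lam' t ≥ -2Λε e^{-γt} lam t - 2Λε e^{-γt} √(lam t) - 2ε² e^{-2γt} lam t`,
then `√(lam t) ≥ e^{-(2Λε+ε²)/(2γ)} √(lam 0) - Λε/γ` on `[0, T]`. -/
theorem stmt_0 (Λ ε γ T : ℝ) (hΛ : 0 < Λ) (hε : 0 < ε) (hγ : 0 < γ) (hT : 0 < T)
    (lam : ℝ → ℝ)
    (hdiff : ∀ t ∈ Set.Icc (0 : ℝ) T, DifferentiableAt ℝ lam t)
    (hpos : ∀ t ∈ Set.Icc (0 : ℝ) T, 0 < lam t)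
    (hineq : ∀ t ∈ Set.Icc (0 : ℝ) T,
      deriv lam t ≥
        -(2 * Λ * ε * Real.exp (-γ * t)) * lam t
          - 2 * Λ * ε * Real.exp (-γ * t) * Real.sqrt (lam t)
          - 2 * ε ^ 2 * Real.exp (-2 * γ * t) * lam t) :
    ∀ t ∈ Set.Icc (0 : ℝ) T,
      Real.sqrt (lam t) ≥
        Real.exp (-(2 * Λ * ε + ε ^ 2) / (2 * γ)) * Real.sqrt (lam 0) - Λ * ε / γ :=
  stmt_0_general Λ ε γ T hΛ hε hγ lam hdiff hpos hineq
end

section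
/- Let Λ, ε, γ, T be positive real numbers. Suppose μ : ℝ → ℝ is differentiable at every point of [0, T], satisfies μ(t) ≥ 0 for all t ∈ [0, T], and obeys the linear differential inequality μ'(t) ≥ −(Λε·e^{−γt} + ε²·e^{−2γt})·μ(t) − Λε·e^{−γt} for all t ∈ [0, T]. Then for every t ∈ [0, T] one has μ(t) ≥ e^{−(2Λε+ε²)/(2γ)}·μ(0) − Λε/γ. -/
/-! With `A' = a` and `B' = b`, the integrating factor `e^A` turns `μ' ≥ -a μ - b` into
`(e^A (μ + B))' = e^A (a B + (μ' + a μ + b)) ≥ 0` as soon as `a, B ≥ 0`, so `e^A (μ + B)` is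
nondecreasing and `μ t ≥ e^{-A t} μ 0 - B t`. Here
`A t = Λε (1 - e^{-γt})/γ + ε² (1 - e^{-2γt})/(2γ)` is at most `(2Λε + ε²)/(2γ)` and
`B t = Λε (1 - e^{-γt})/γ` is at most `Λε/γ`. -/

open Real Set

section LinearDifferentialInequality

variable {s : Set ℝ} {μ μ' A a B b : ℝ → ℝ}

theorem monotoneOn_exp_mul_add_of_neg_mul_sub_le_deriv (hs : Convex ℝ s)
    (hμ : ∀ x ∈ s, HasDerivAt μ (μ' x) x) (hA : ∀ x ∈ s, HasDerivAt A (a x) x)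
    (hB : ∀ x ∈ s, HasDerivAt B (b x) x) (ha : ∀ x ∈ s, 0 ≤ a x) (hB₀ : ∀ x ∈ s, 0 ≤ B x)
    (hle : ∀ x ∈ s, -a x * μ x - b x ≤ μ' x) :
    MonotoneOn (fun x ↦ exp (A x) * (μ x + B x)) s := by
  have hderiv : ∀ x ∈ s, HasDerivAt (fun x ↦ exp (A x) * (μ x + B x))
      (exp (A x) * (a x * B x + (μ' x + a x * μ x + b x))) x := fun x hx ↦
    ((hA x hx).exp.mul ((hμ x hx).fun_add (hB x hx))).congr_deriv (by ring)
  refine monotoneOn_of_hasDerivWithinAt_nonneg hs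
    (fun x hx ↦ (hderiv x hx).continuousAt.continuousWithinAt)
    (fun x hx ↦ (hderiv x (interior_subset hx)).hasDerivWithinAt) fun x hx ↦ ?_
  replace hx := interior_subset hx
  exact mul_nonneg (exp_pos _).le
    (add_nonneg (mul_nonneg (ha x hx) (hB₀ x hx)) (by linarith [hle x hx]))

theorem exp_sub_mul_add_sub_le_of_neg_mul_sub_le_deriv (hs : Convex ℝ s)
    (hμ : ∀ x ∈ s, HasDerivAt μ (μ' x) x) (hA : ∀ x ∈ s, HasDerivAt A (a x) x)
    (hB : ∀ x ∈ s, HasDerivAt B (b x) x) (ha : ∀ x ∈ s, 0 ≤ a x) (hB₀ : ∀ x ∈ s, 0 ≤ B x)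
    (hle : ∀ x ∈ s, -a x * μ x - b x ≤ μ' x) {x y : ℝ}
    (hx : x ∈ s) (hy : y ∈ s) (hxy : x ≤ y) :
    exp (A x - A y) * (μ x + B x) - B y ≤ μ y := by
  have hmono := monotoneOn_exp_mul_add_of_neg_mul_sub_le_deriv hs hμ hA hB ha hB₀ hle hx hy hxy
  have key : exp (A x - A y) * (μ x + B x) ≤ μ y + B y := calc
    exp (A x - A y) * (μ x + B x) = exp (-A y) * (exp (A x) * (μ x + B x)) := by
      rw [← mul_assoc, ← exp_add, neg_add_eq_sub]
    _ ≤ exp (-A y) * (exp (A y) * (μ y + B y)) := by gcongr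
    _ = μ y + B y := by rw [← mul_assoc, ← exp_add, neg_add_cancel, exp_zero, one_mul]
  linarith

end LinearDifferentialInequality

section OneSubExpNegMulDiv

variable {c : ℝ}

theorem hasDerivAt_one_sub_exp_neg_mul_div (hc : c ≠ 0) (t : ℝ) :
    HasDerivAt (fun s ↦ (1 - exp (-c * s)) / c) (exp (-c * t)) t :=
  (((hasDerivAt_const_mul (-c)).exp.const_sub 1).div_const c).congr_deriv (by field_simp)

theorem one_sub_exp_neg_mul_div_nonneg (hc : 0 < c) {t : ℝ} (ht : 0 ≤ t) :
    0 ≤ (1 - exp (-c * t)) / c :=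
  div_nonneg (sub_nonneg.2 (exp_le_one_iff.2 (by nlinarith))) hc.le

theorem one_sub_exp_neg_mul_div_le (hc : 0 < c) (t : ℝ) :
    (1 - exp (-c * t)) / c ≤ 1 / c :=
  div_le_div_of_nonneg_right (by linarith [exp_pos (-c * t)]) hc.le

end OneSubExpNegMulDiv

theorem stmt_1_general (Λ ε γ T : ℝ) (hΛ : 0 < Λ) (hε : 0 < ε) (hγ : 0 < γ)
    (μ : ℝ → ℝ)
    (hdiff : ∀ t ∈ Set.Icc (0 : ℝ) T, DifferentiableAt ℝ μ t)
    (hnonneg : ∀ t ∈ Set.Icc (0 : ℝ) T, 0 ≤ μ t)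
    (hineq : ∀ t ∈ Set.Icc (0 : ℝ) T,
      deriv μ t ≥
        -(Λ * ε * Real.exp (-γ * t) + ε ^ 2 * Real.exp (-2 * γ * t)) * μ t
          - Λ * ε * Real.exp (-γ * t)) :
    ∀ t ∈ Set.Icc (0 : ℝ) T,
      μ t ≥ Real.exp (-(2 * Λ * ε + ε ^ 2) / (2 * γ)) * μ 0 - Λ * ε / γ := by
  intro t ht
  have hΛε : 0 < Λ * ε := mul_pos hΛ hε
  have h2γ : 0 < 2 * γ := by positivity
  have h0 : (0 : ℝ) ∈ Icc 0 T := left_mem_Icc.2 (ht.1.trans ht.2)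
  have hbound := exp_sub_mul_add_sub_le_of_neg_mul_sub_le_deriv (convex_Icc 0 T)
    (A := fun s ↦ Λ * ε * ((1 - exp (-γ * s)) / γ) + ε ^ 2 * ((1 - exp (-(2 * γ) * s)) / (2 * γ)))
    (B := fun s ↦ Λ * ε * ((1 - exp (-γ * s)) / γ))
    (fun x hx ↦ (hdiff x hx).hasDerivAt)
    (fun x _ ↦ by
      simpa only [neg_mul] using
        ((hasDerivAt_one_sub_exp_neg_mul_div hγ.ne' x).const_mul _).fun_add
          ((hasDerivAt_one_sub_exp_neg_mul_div h2γ.ne' x).const_mul _))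
    (fun x _ ↦ (hasDerivAt_one_sub_exp_neg_mul_div hγ.ne' x).const_mul _)
    (fun x _ ↦ by positivity)
    (fun x hx ↦ mul_nonneg hΛε.le (one_sub_exp_neg_mul_div_nonneg hγ hx.1))
    hineq h0 ht ht.1
  simp only [mul_zero, exp_zero, sub_self, zero_div, add_zero, zero_sub] at hbound
  set Bt := Λ * ε * ((1 - exp (-γ * t)) / γ)
  set At := Bt + ε ^ 2 * ((1 - exp (-(2 * γ) * t)) / (2 * γ))
  have hA : At ≤ (2 * Λ * ε + ε ^ 2) / (2 * γ) := calc
    At ≤ Λ * ε * (1 / γ) + ε ^ 2 * (1 / (2 * γ)) := by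
      gcongr ?_ * ?_ + ?_ * ?_ <;> exact one_sub_exp_neg_mul_div_le ‹_› t
    _ = (2 * Λ * ε + ε ^ 2) / (2 * γ) := by field_simp
  have hB : Bt ≤ Λ * ε / γ := by
    simpa only [mul_one_div] using
      mul_le_mul_of_nonneg_left (one_sub_exp_neg_mul_div_le hγ t) hΛε.le
  have hexp : exp (-(2 * Λ * ε + ε ^ 2) / (2 * γ)) ≤ exp (-At) :=
    exp_le_exp.2 (by rw [neg_div]; linarith)
  exact (sub_le_sub (mul_le_mul_of_nonneg_right hexp (hnonneg 0 h0)) hB).trans hbound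

/-- Comparison step in the proof of Lemma 3.2: if `μ ≥ 0` is differentiable on
`[0, T]` and satisfies the linear differential inequality
`μ' t ≥ -(Λε e^{-γt} + ε² e^{-2γt}) μ t - Λε e^{-γt}`,
then `μ t ≥ e^{-(2Λε+ε²)/(2γ)} μ 0 - Λε/γ` on `[0, T]`. -/
theorem stmt_1 (Λ ε γ T : ℝ) (hΛ : 0 < Λ) (hε : 0 < ε) (hγ : 0 < γ) (hT : 0 < T)
    (μ : ℝ → ℝ)
    (hdiff : ∀ t ∈ Set.Icc (0 : ℝ) T, DifferentiableAt ℝ μ t)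
    (hnonneg : ∀ t ∈ Set.Icc (0 : ℝ) T, 0 ≤ μ t)
    (hineq : ∀ t ∈ Set.Icc (0 : ℝ) T,
      deriv μ t ≥
        -(Λ * ε * Real.exp (-γ * t) + ε ^ 2 * Real.exp (-2 * γ * t)) * μ t
          - Λ * ε * Real.exp (-γ * t)) :
    ∀ t ∈ Set.Icc (0 : ℝ) T,
      μ t ≥ Real.exp (-(2 * Λ * ε + ε ^ 2) / (2 * γ)) * μ 0 - Λ * ε / γ :=
  stmt_1_general Λ ε γ T hΛ hε hγ μ hdiff hnonneg hineq
end

section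
/- Let Λ, ε, γ, T be positive real numbers. Suppose μ : ℝ → ℝ is differentiable at every point of [0, T], satisfies μ(t) ≥ 0 for all t ∈ [0, T], and obeys μ'(t) ≥ −(Λε·e^{−γt} + ε²·e^{−2γt})·μ(t) − Λε·e^{−γt} for all t ∈ [0, T]. Then for every t ∈ [0, T] one has the integrated inequality e^{−(1/(2γ))(2Λε·e^{−γt} + ε²·e^{−2γt})}·μ(t) ≥ e^{−(1/(2γ))(2Λε + ε²)}·μ(0) + (Λε/γ)·∫₁^{e^{−γt}} e^{−(1/(2γ))(2Λε·u + ε²·u²)} du, where the integral is the (signed) integral of the real function u ↦ e^{−(1/(2γ))(2Λε·u + ε²·u²)} from 1 to e^{−γt}. -/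
/-!
Integrating factor: with `A' = Λε e^{-γs} + ε² e^{-2γs}`, the differential inequality says
`(e^{A} μ)' ≥ -Λε e^{-γs} e^{A}`. The substitution `u = e^{-γs}` turns `e^{A(s)}` into the
integrand `e^{-(1/(2γ))(2Λε u + ε² u²)}`, so the right-hand side is the derivative of
`(Λε/γ) ∫₁^{e^{-γs}} …`, and the difference of the two sides is monotone on `[0, T]`.
-/

open Real Set

theorem monotoneOn_exp_mul_add_of_deriv_ge {μ A B a b : ℝ → ℝ} {x y : ℝ}
    (hμ : ∀ s ∈ Icc x y, DifferentiableAt ℝ μ s)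
    (hA : ∀ s, HasDerivAt A (a s) s)
    (hB : ∀ s, HasDerivAt B (exp (A s) * b s) s)
    (hineq : ∀ s ∈ Icc x y, -a s * μ s - b s ≤ deriv μ s) :
    MonotoneOn (fun s => exp (A s) * μ s + B s) (Icc x y) := by
  have hderiv : ∀ s ∈ Icc x y, HasDerivAt (fun s => exp (A s) * μ s + B s)
      (exp (A s) * a s * μ s + exp (A s) * deriv μ s + exp (A s) * b s) s :=
    fun s hs => ((hA s).exp.mul (hμ s hs).hasDerivAt).add (hB s)
  refine monotoneOn_of_deriv_nonneg (convex_Icc x y)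
    (fun s hs => (hderiv s hs).continuousAt.continuousWithinAt)
    (fun s hs => (hderiv s (interior_subset hs)).differentiableAt.differentiableWithinAt)
    (fun s hs => ?_)
  rw [(hderiv s (interior_subset hs)).deriv]
  have := mul_nonneg (exp_pos (A s)).le (sub_nonneg.2 (hineq s (interior_subset hs)))
  linarith

theorem exp_neg_two_mul_eq_sq (γ s : ℝ) : exp (-2 * γ * s) = exp (-γ * s) ^ 2 := by
  rw [sq, ← exp_add]
  ring_nf

theorem hasDerivAt_exp_const_mul (c s : ℝ) :
    HasDerivAt (fun s => exp (c * s)) (c * exp (c * s)) s := by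
  simpa [mul_comm] using ((hasDerivAt_id s).const_mul c).exp

theorem hasDerivAt_integrating_exponent {Λ ε γ : ℝ} (hγ : γ ≠ 0) (s : ℝ) :
    HasDerivAt
      (fun s => -(1 / (2 * γ)) * (2 * Λ * ε * exp (-γ * s) + ε ^ 2 * exp (-2 * γ * s)))
      (Λ * ε * exp (-γ * s) + ε ^ 2 * exp (-2 * γ * s)) s := by
  refine ((((hasDerivAt_exp_const_mul (-γ) s).const_mul (2 * Λ * ε)).add
    ((hasDerivAt_exp_const_mul (-2 * γ) s).const_mul (ε ^ 2))).const_mul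
      (-(1 / (2 * γ)))).congr_deriv ?_
  field_simp
  ring

theorem hasDerivAt_integral_exp_quadratic {Λ ε γ : ℝ} (hγ : γ ≠ 0) (s : ℝ) :
    HasDerivAt
      (fun s => -(Λ * ε / γ) * ∫ u in (1 : ℝ)..exp (-γ * s),
        exp (-(1 / (2 * γ)) * (2 * Λ * ε * u + ε ^ 2 * u ^ 2)))
      (exp (-(1 / (2 * γ)) * (2 * Λ * ε * exp (-γ * s) + ε ^ 2 * exp (-2 * γ * s)))
        * (Λ * ε * exp (-γ * s))) s := by
  have hcont : Continuous fun u : ℝ =>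
      exp (-(1 / (2 * γ)) * (2 * Λ * ε * u + ε ^ 2 * u ^ 2)) := by
    fun_prop
  have hint := (hcont.integral_hasStrictDerivAt 1 (exp (-γ * s))).hasDerivAt.comp s
    (hasDerivAt_exp_const_mul (-γ) s)
  refine (hint.const_mul (-(Λ * ε / γ))).congr_deriv ?_
  rw [exp_neg_two_mul_eq_sq]
  field_simp

theorem stmt_2_general (Λ ε γ T : ℝ) (hγ : 0 < γ)
    (μ : ℝ → ℝ)
    (hdiff : ∀ t ∈ Set.Icc (0 : ℝ) T, DifferentiableAt ℝ μ t)
    (hineq : ∀ t ∈ Set.Icc (0 : ℝ) T,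
      deriv μ t ≥
        -(Λ * ε * Real.exp (-γ * t) + ε ^ 2 * Real.exp (-2 * γ * t)) * μ t
          - Λ * ε * Real.exp (-γ * t)) :
    ∀ t ∈ Set.Icc (0 : ℝ) T,
      Real.exp (-(1 / (2 * γ)) * (2 * Λ * ε * Real.exp (-γ * t)
          + ε ^ 2 * Real.exp (-2 * γ * t))) * μ t ≥
        Real.exp (-(1 / (2 * γ)) * (2 * Λ * ε + ε ^ 2)) * μ 0
          + (Λ * ε / γ) * ∫ u in (1 : ℝ)..(Real.exp (-γ * t)),
              Real.exp (-(1 / (2 * γ)) * (2 * Λ * ε * u + ε ^ 2 * u ^ 2)) := by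
  intro t ht
  have hmono := monotoneOn_exp_mul_add_of_deriv_ge hdiff
    (hasDerivAt_integrating_exponent (Λ := Λ) (ε := ε) hγ.ne')
    (hasDerivAt_integral_exp_quadratic hγ.ne') hineq
  have h0t := hmono ⟨le_rfl, ht.1.trans ht.2⟩ ht ht.1
  simp only [mul_zero, exp_zero, mul_one, intervalIntegral.integral_same] at h0t
  linarith

/-- Sharp integrated inequality from the proof of Lemma 3.2: under the same
differential inequality as in the comparison step, one has
`e^{-(1/(2γ))(2Λε e^{-γt} + ε² e^{-2γt})} μ t
  ≥ e^{-(1/(2γ))(2Λε + ε²)} μ 0 + (Λε/γ) ∫₁^{e^{-γt}} e^{-(1/(2γ))(2Λε u + ε² u²)} du`. -/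
theorem stmt_2 (Λ ε γ T : ℝ) (hΛ : 0 < Λ) (hε : 0 < ε) (hγ : 0 < γ) (hT : 0 < T)
    (μ : ℝ → ℝ)
    (hdiff : ∀ t ∈ Set.Icc (0 : ℝ) T, DifferentiableAt ℝ μ t)
    (hnonneg : ∀ t ∈ Set.Icc (0 : ℝ) T, 0 ≤ μ t)
    (hineq : ∀ t ∈ Set.Icc (0 : ℝ) T,
      deriv μ t ≥
        -(Λ * ε * Real.exp (-γ * t) + ε ^ 2 * Real.exp (-2 * γ * t)) * μ t
          - Λ * ε * Real.exp (-γ * t)) :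
    ∀ t ∈ Set.Icc (0 : ℝ) T,
      Real.exp (-(1 / (2 * γ)) * (2 * Λ * ε * Real.exp (-γ * t)
          + ε ^ 2 * Real.exp (-2 * γ * t))) * μ t ≥
        Real.exp (-(1 / (2 * γ)) * (2 * Λ * ε + ε ^ 2)) * μ 0
          + (Λ * ε / γ) * ∫ u in (1 : ℝ)..(Real.exp (-γ * t)),
              Real.exp (-(1 / (2 * γ)) * (2 * Λ * ε * u + ε ^ 2 * u ^ 2)) :=
  stmt_2_general Λ ε γ T hγ μ hdiff hineq
end
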